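/- In ℝ² with the Euclidean norm, let Ω₁ = {(t,t²) : t ∈ ℝ}, Ω₂ = {(t,−t²) : t ∈ ℝ}, and x̄ = (0,0). Then for every ε > 0, (Ω₁ − (0,−ε)) ∩ (Ω₂ − (0,ε)) = ∅; consequently the collection {Ω₁, Ω₂} is not [q]-semiregular at x̄ for any q > 0. -/

import Mathlib

open Metric

local notation "E" => EuclideanSpace ℝ (Fin 2)

/-- The vector `(a, b)` in `E`. -/
def vec (a b : ℝ) : E := WithLp.toLp 2 ![a, b]

/-- `[q]`-semiregularity of the pair `{Ω₁, Ω₂}` at `0`. -/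
def SemiReg2 (q : ℝ) (Ω₁ Ω₂ : Set E) : Prop :=
  ∃ α > (0:ℝ), ∃ δ > (0:ℝ), ∀ ρ ∈ Set.Ioo (0:ℝ) δ, ∀ x₁ x₂ : E,
    ‖x₁‖ ≤ (α * ρ) ^ (1 / q) → ‖x₂‖ ≤ (α * ρ) ^ (1 / q) →
    ∃ y ∈ Metric.closedBall (0:E) ρ, y + x₁ ∈ Ω₁ ∧ y + x₂ ∈ Ω₂

/-! The two parabolas touch at the origin, but pushing them apart vertically by any `ε > 0`
separates them completely, whereas semiregularity would need the shifted sets to meet near `0`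
once the shifts are small enough. -/

lemma norm_vec_zero_left (b : ℝ) : ‖vec 0 b‖ = |b| := by
  simp [vec, EuclideanSpace.norm_eq, Fin.sum_univ_two, Real.sqrt_sq_eq_abs]

lemma not_semiReg2_of_disjoint_small_shifts {Ω₁ Ω₂ : Set E} (q : ℝ)
    (h : ∀ r > 0, ∃ x₁ x₂ : E, ‖x₁‖ ≤ r ∧ ‖x₂‖ ≤ r ∧ ∀ y, y + x₁ ∈ Ω₁ → y + x₂ ∉ Ω₂) :
    ¬ SemiReg2 q Ω₁ Ω₂ := by
  rintro ⟨α, hα, δ, hδ, hreg⟩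
  obtain ⟨x₁, x₂, h₁, h₂, hdisj⟩ := h ((α * (δ / 2)) ^ (1 / q)) (by positivity)
  obtain ⟨y, -, hy₁, hy₂⟩ := hreg (δ / 2) ⟨by positivity, by linarith⟩ x₁ x₂ h₁ h₂
  exact hdisj y hy₁ hy₂

lemma parabolas_shifted_apart {ε : ℝ} (hε : 0 < ε) (y : E)
    (hup : y + vec 0 (-ε) ∈ {p : E | ∃ t : ℝ, p = ![t, t ^ 2]}) :
    y + vec 0 ε ∉ {p : E | ∃ t : ℝ, p = ![t, -t ^ 2]} := by
  obtain ⟨t, ht⟩ := hup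
  rintro ⟨s, hs⟩
  have ht₀ := congrFun ht 0
  have ht₁ := congrFun ht 1
  have hs₀ := congrFun hs 0
  have hs₁ := congrFun hs 1
  simp only [PiLp.add_apply, vec, Matrix.cons_val_zero, Matrix.cons_val_one] at ht₀ ht₁ hs₀ hs₁
  obtain rfl : t = s := by linarith
  nlinarith [sq_nonneg t]

theorem not_semiReg_parabolas :
    (∀ ε > (0:ℝ),
      {y : E | y + vec (0) (-ε) ∈ {p : E | ∃ t : ℝ, p = ![t, t ^ 2]} ∧
               y + vec (0) (ε) ∈ {p : E | ∃ t : ℝ, p = ![t, -t ^ 2]}} = ∅) ∧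
    ∀ q > (0:ℝ),
      ¬ SemiReg2 q {p : E | ∃ t : ℝ, p = ![t, t ^ 2]} {p : E | ∃ t : ℝ, p = ![t, -t ^ 2]} := by
  refine ⟨fun ε hε => Set.eq_empty_iff_forall_notMem.2 fun y hy =>
    parabolas_shifted_apart hε y hy.1 hy.2, fun q _ => ?_⟩
  refine not_semiReg2_of_disjoint_small_shifts q fun r hr => ?_
  refine ⟨vec 0 (-r), vec 0 r, ?_, ?_, parabolas_shifted_apart hr⟩ <;>
    simp [norm_vec_zero_left, abs_of_pos hr]
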